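/- arXiv:1206.0072 — 3 statements merged into one kernel-verified Lean document; each statement's English description precedes it below -/
import Mathlib

section
/- Let N be a positive integer and D < 0. The Fricke map W sending [Na₀, b, c] ∈ Q_{N,D} to [Nc, −b, a₀] maps Q_{N,D} into itself, satisfies W(W(T)) = T, sends Γ₀(N)-equivalent forms to Γ₀(N)-equivalent forms (hence induces an involution on Q_{N,D}/Γ₀(N)), and satisfies ε(W(T)) = ε(T) for every T ∈ Q_{N,D}. -/
/-- `SL(2, ℤ)`. -/
abbrev SL2Z := Matrix.SpecialLinearGroup (Fin 2) ℤ

/-- An integral binary quadratic form `a x² + b x y + c y²`. -/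
structure BQF where
  a : ℤ
  b : ℤ
  c : ℤ

namespace BQF

/-- The value of the form at `(x, y)`. -/
def eval (T : BQF) (x y : ℤ) : ℤ := T.a * x ^ 2 + T.b * x * y + T.c * y ^ 2

/-- The discriminant `b² - 4ac`. -/
def disc (T : BQF) : ℤ := T.b ^ 2 - 4 * T.a * T.c

/-- Positive definiteness. -/
def PosDef (T : BQF) : Prop := ∀ x y : ℤ, ¬(x = 0 ∧ y = 0) → 0 < T.eval x y

/-- The action `T[U]` of `SL(2, ℤ)` on binary quadratic forms:
`T[U](x, y) = T(αx + βy, γx + δy)` for `U = (α β; γ δ)`. -/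
def act (T : BQF) (U : SL2Z) : BQF :=
  ⟨T.a * (U.1 0 0) ^ 2 + T.b * (U.1 0 0) * (U.1 1 0) + T.c * (U.1 1 0) ^ 2,
   2 * T.a * (U.1 0 0) * (U.1 0 1) + T.b * ((U.1 0 0) * (U.1 1 1) + (U.1 0 1) * (U.1 1 0))
     + 2 * T.c * (U.1 1 0) * (U.1 1 1),
   T.a * (U.1 0 1) ^ 2 + T.b * (U.1 0 1) * (U.1 1 1) + T.c * (U.1 1 1) ^ 2⟩

end BQF

/-- `Γ₀(N)`: matrices in `SL(2, ℤ)` whose lower-left entry is divisible by `N`. -/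
def Gamma0Set (N : ℕ) : Set SL2Z := {U | (N : ℤ) ∣ U.1 1 0}

/-- `Q_{N,D}`: positive definite forms `[Na, b, c]` of discriminant `D`. -/
def QND (N : ℕ) (D : ℤ) : Set BQF :=
  {T | T.PosDef ∧ (N : ℤ) ∣ T.a ∧ T.disc = D}

/-- `Q_{N,D,ρ}`: members of `Q_{N,D}` with `b ≡ ρ (mod 2N)`. -/
def QNDrho (N : ℕ) (D ρ : ℤ) : Set BQF :=
  {T | T ∈ QND N D ∧ T.b ≡ ρ [ZMOD (2 * N)]}

/-- `ε(T) = #{U ∈ Γ₀(N) : T[U] = T}`. -/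
noncomputable def eps (N : ℕ) (T : BQF) : ℕ :=
  Nat.card {U : SL2Z // U ∈ Gamma0Set N ∧ T.act U = T}

/-- `R` is a set of representatives for the `Γ₀(N)`-orbits on `S`: every member of `R`
lies in `S`, and every member of `S` is `Γ₀(N)`-equivalent to exactly one member of `R`. -/
def IsOrbitReps (N : ℕ) (S : Set BQF) (R : Finset BQF) : Prop :=
  (∀ T ∈ R, T ∈ S) ∧ ∀ T ∈ S, ∃! T', T' ∈ R ∧ ∃ U ∈ Gamma0Set N, T.act U = T'

/-- A fundamental discriminant: either squarefree and `≡ 1 (mod 4)`, or `4m` with `m`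
squarefree and `m ≡ 2, 3 (mod 4)`. -/
def IsFundamentalDiscriminant (D : ℤ) : Prop :=
  (Squarefree D ∧ D % 4 = 1) ∨
    (∃ m : ℤ, D = 4 * m ∧ Squarefree m ∧ (m % 4 = 2 ∨ m % 4 = 3))

/-- The Fricke map `W` sending `[Na₀, b, c]` to `[Nc, −b, a₀]` (for forms whose leading
coefficient is divisible by `N`). -/
def fricke (N : ℕ) (T : BQF) : BQF := ⟨(N : ℤ) * T.c, -T.b, T.a / N⟩

section FrickeAux

private lemma frk_Nne (N : ℕ) (hN : 0 < N) : (N : ℤ) ≠ 0 := by exact_mod_cast hN.ne'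

/-- Conjugation by the Fricke involution matrix. -/
def conjW (N : ℕ) (hN : 0 < N) (U : SL2Z) (h : (N : ℤ) ∣ U.1 1 0) : SL2Z :=
  ⟨!![U.1 1 1, -(U.1 1 0 / N); -((N : ℤ) * U.1 0 1), U.1 0 0], by
    obtain ⟨g, hg⟩ := h
    have hdet := U.2
    rw [Matrix.det_fin_two] at hdet
    rw [Matrix.det_fin_two_of, hg, Int.mul_ediv_cancel_left _ (frk_Nne N hN)]
    rw [hg] at hdet
    nlinarith [hdet]⟩

lemma conjW_entries (N : ℕ) (hN : 0 < N) (U : SL2Z) (h : (N : ℤ) ∣ U.1 1 0) :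
    (conjW N hN U h).1 0 0 = U.1 1 1 ∧ (conjW N hN U h).1 0 1 = -(U.1 1 0 / N) ∧
    (conjW N hN U h).1 1 0 = -((N : ℤ) * U.1 0 1) ∧ (conjW N hN U h).1 1 1 = U.1 0 0 := by
  refine ⟨?_, ?_, ?_, ?_⟩ <;> simp [conjW]

lemma conjW_mem (N : ℕ) (hN : 0 < N) (U : SL2Z) (h : (N : ℤ) ∣ U.1 1 0) :
    conjW N hN U h ∈ Gamma0Set N := by
  refine ⟨-(U.1 0 1), ?_⟩
  rw [(conjW_entries N hN U h).2.2.1]; ring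

lemma fricke_eq (N : ℕ) (hN : 0 < N) (T : BQF) (a0 : ℤ) (h : T.a = (N : ℤ) * a0) :
    fricke N T = ⟨(N : ℤ) * T.c, -T.b, a0⟩ := by
  simp [fricke, h, Int.mul_ediv_cancel_left _ (frk_Nne N hN)]

lemma fricke_fricke (N : ℕ) (hN : 0 < N) (T : BQF) (hTa : (N : ℤ) ∣ T.a) :
    fricke N (fricke N T) = T := by
  obtain ⟨a0, ha0⟩ := hTa
  obtain ⟨a, b, c⟩ := T
  have ha0' : a = (N : ℤ) * a0 := ha0
  subst ha0'
  simp [fricke, Int.mul_ediv_cancel_left _ (frk_Nne N hN)]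

lemma fricke_dvd (N : ℕ) (hN : 0 < N) (T : BQF) (hTa : (N : ℤ) ∣ T.a) :
    (N : ℤ) ∣ (fricke N T).a := by
  obtain ⟨a0, ha0⟩ := hTa
  rw [fricke_eq N hN T a0 ha0]
  exact ⟨T.c, rfl⟩

lemma fricke_act (N : ℕ) (hN : 0 < N) (T : BQF) (hTa : (N : ℤ) ∣ T.a)
    (U : SL2Z) (hU : (N : ℤ) ∣ U.1 1 0) :
    (fricke N T).act (conjW N hN U hU) = fricke N (T.act U) := by
  obtain ⟨a0, ha0⟩ := id hTa
  obtain ⟨g, hg⟩ := id hU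
  have hact : (T.act U).a = (N : ℤ) * (a0 * (U.1 0 0) ^ 2 + T.b * (U.1 0 0) * g
      + T.c * N * g ^ 2) := by
    simp only [BQF.act]; rw [ha0, hg]; ring
  rw [fricke_eq N hN T a0 ha0, fricke_eq N hN (T.act U) _ hact]
  obtain ⟨e00, e01, e10, e11⟩ := conjW_entries N hN U hU
  simp only [BQF.act, e00, e01, e10, e11, BQF.mk.injEq]
  rw [hg, ha0, Int.mul_ediv_cancel_left _ (frk_Nne N hN)]
  refine ⟨by ring, by ring, by ring⟩

lemma conjW_conjW (N : ℕ) (hN : 0 < N) (U : SL2Z) (h : (N : ℤ) ∣ U.1 1 0)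
    (h' : (N : ℤ) ∣ (conjW N hN U h).1 1 0) :
    conjW N hN (conjW N hN U h) h' = U := by
  obtain ⟨g, hg⟩ := id h
  obtain ⟨e00, e01, e10, e11⟩ := conjW_entries N hN U h
  obtain ⟨f00, f01, f10, f11⟩ := conjW_entries N hN (conjW N hN U h) h'
  apply Subtype.ext
  ext i j
  fin_cases i <;> fin_cases j
  · show (conjW N hN (conjW N hN U h) h').1 0 0 = U.1 0 0
    rw [f00, e11]
  · show (conjW N hN (conjW N hN U h) h').1 0 1 = U.1 0 1
    rw [f01, e10]
    have h1 : -((N : ℤ) * U.1 0 1) = (N : ℤ) * (-(U.1 0 1)) := by ring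
    rw [h1, Int.mul_ediv_cancel_left _ (frk_Nne N hN), neg_neg]
  · show (conjW N hN (conjW N hN U h) h').1 1 0 = U.1 1 0
    rw [f10, e01, hg, Int.mul_ediv_cancel_left _ (frk_Nne N hN)]
    ring
  · show (conjW N hN (conjW N hN U h) h').1 1 1 = U.1 1 1
    rw [f11, e00]

end FrickeAux

/-- For `N > 0` and `D < 0`, the Fricke map `W : [Na₀, b, c] ↦ [Nc, −b, a₀]` maps
`Q_{N,D}` into itself, satisfies `W(W(T)) = T`, sends `Γ₀(N)`-equivalent forms to
`Γ₀(N)`-equivalent forms (hence induces an involution on `Q_{N,D}/Γ₀(N)`), and satisfies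
`ε(W(T)) = ε(T)` for every `T ∈ Q_{N,D}`. -/


theorem stmt7 (N : ℕ) (hN : 0 < N) (D : ℤ) (hD : D < 0) :
    (∀ T ∈ QND N D, fricke N T ∈ QND N D) ∧
    (∀ T ∈ QND N D, fricke N (fricke N T) = T) ∧
    (∀ T ∈ QND N D, ∀ T' ∈ QND N D, (∃ U ∈ Gamma0Set N, T.act U = T') →
      ∃ U ∈ Gamma0Set N, (fricke N T).act U = fricke N T') ∧
    (∀ T ∈ QND N D, eps N (fricke N T) = eps N T) := by
  have hNpos : (0 : ℤ) < (N : ℤ) := by exact_mod_cast hN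
  have part1 : ∀ T ∈ QND N D, fricke N T ∈ QND N D := by
    rintro T ⟨hpd, hTa, hdisc⟩
    obtain ⟨a0, ha0⟩ := id hTa
    rw [fricke_eq N hN T a0 ha0]
    refine ⟨?_, ⟨T.c, rfl⟩, ?_⟩
    · intro x y hxy
      have hne : ¬(y = 0 ∧ -((N : ℤ) * x) = 0) := by
        rintro ⟨hy, hx⟩
        rcases mul_eq_zero.mp (neg_eq_zero.mp hx) with h | h
        · exact absurd h (frk_Nne N hN)
        · exact hxy ⟨h, hy⟩
      have hp := hpd y (-((N : ℤ) * x)) hne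
      have hkey : T.eval y (-((N : ℤ) * x))
          = (N : ℤ) * (BQF.mk ((N : ℤ) * T.c) (-T.b) a0).eval x y := by
        simp only [BQF.eval]; rw [ha0]; ring
      rw [hkey] at hp
      nlinarith [hp, hNpos]
    · simp only [BQF.disc] at hdisc ⊢
      rw [ha0] at hdisc
      rw [← hdisc]; ring
  refine ⟨part1, fun T hT => fricke_fricke N hN T hT.2.1, ?_, ?_⟩
  · rintro T hT T' hT' ⟨U, hU, hact⟩
    refine ⟨conjW N hN U hU, conjW_mem N hN U hU, ?_⟩
    rw [fricke_act N hN T hT.2.1 U hU, hact]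
  · intro T hT
    have hTa := hT.2.1
    have hfa := fricke_dvd N hN T hTa
    refine Nat.card_congr ?_
    refine
      { toFun := fun p => ⟨conjW N hN p.1 p.2.1, conjW_mem N hN p.1 p.2.1, ?_⟩
        invFun := fun p => ⟨conjW N hN p.1 p.2.1, conjW_mem N hN p.1 p.2.1, ?_⟩
        left_inv := ?_
        right_inv := ?_ }
    · obtain ⟨U, hU, hfix⟩ := p
      have h2 := fricke_act N hN (fricke N T) hfa U hU
      rw [hfix, fricke_fricke N hN T hTa] at h2
      exact h2
    · obtain ⟨U, hU, hfix⟩ := p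
      have h2 := fricke_act N hN T hTa U hU
      rw [hfix] at h2
      exact h2
    · rintro ⟨U, hU, hfix⟩
      exact Subtype.ext (conjW_conjW N hN U hU (conjW_mem N hN U hU))
    · rintro ⟨U, hU, hfix⟩
      exact Subtype.ext (conjW_conjW N hN U hU (conjW_mem N hN U hU))
end

section
/- Let N be a squarefree positive integer, D a fundamental discriminant, and let ρ, ρ′ be integers with ρ² ≡ D (mod 4N) and ρ′² ≡ D (mod 4N). Then there exist coprime positive integers N₁ and N₂ with N = N₁·N₂ such that ρ′ ≡ −ρ (mod 2N₁) and ρ′ ≡ ρ (mod 2N₂). -/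
/-- Let `N` be a squarefree positive integer, `D` a fundamental discriminant, and let
`ρ, ρ′` be integers with `ρ² ≡ ρ′² ≡ D (mod 4N)`.  Then there exist coprime positive
integers `N₁, N₂` with `N = N₁·N₂`, `ρ′ ≡ −ρ (mod 2N₁)` and `ρ′ ≡ ρ (mod 2N₂)`. -/
theorem stmt10 (N : ℕ) (hN : 0 < N) (hNsf : Squarefree N)
    (D : ℤ) (hD : IsFundamentalDiscriminant D)
    (ρ ρ' : ℤ) (hρ : ρ ^ 2 ≡ D [ZMOD (4 * N)]) (hρ' : ρ' ^ 2 ≡ D [ZMOD (4 * N)]) :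
    ∃ N₁ N₂ : ℕ, 0 < N₁ ∧ 0 < N₂ ∧ Nat.Coprime N₁ N₂ ∧ N = N₁ * N₂ ∧
      ρ' ≡ -ρ [ZMOD (2 * N₁)] ∧ ρ' ≡ ρ [ZMOD (2 * N₂)] := by
  -- 4N divides (ρ'+ρ)(ρ'-ρ)
  have hAB : ((4 * N : ℕ) : ℤ) ∣ (ρ' + ρ) * (ρ' - ρ) := by
    have h := (hρ'.trans hρ.symm)
    have := Int.ModEq.dvd h
    have heq : ρ ^ 2 - ρ' ^ 2 = -((ρ' + ρ) * (ρ' - ρ)) := by ring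
    rw [heq] at this
    exact (dvd_neg.mp this)
  have h4N : (4 * (N : ℤ)) ∣ (ρ' + ρ) * (ρ' - ρ) := by
    simpa [Nat.cast_mul] using hAB
  -- both ρ'+ρ and ρ'-ρ are even
  have hA2 : (2 : ℤ) ∣ (ρ' + ρ) := by
    rcases Int.even_or_odd (ρ' + ρ) with h | h
    · exact h.two_dvd
    · exfalso
      have hB : Odd (ρ' - ρ) := by
        have : ρ' - ρ = (ρ' + ρ) - 2 * ρ := by ring
        rw [this]
        exact h.sub_even (even_two_mul ρ)
      have hodd : Odd ((ρ' + ρ) * (ρ' - ρ)) := h.mul hB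
      have h2 : (2 : ℤ) ∣ (ρ' + ρ) * (ρ' - ρ) :=
        dvd_trans ⟨2 * (N : ℤ), by ring⟩ h4N
      rw [Int.odd_iff] at hodd
      omega
  have hB2 : (2 : ℤ) ∣ (ρ' - ρ) := by
    obtain ⟨a, ha⟩ := hA2
    exact ⟨a - ρ, by linarith⟩
  obtain ⟨a, ha⟩ := hA2
  obtain ⟨b, hb⟩ := hB2
  -- N ∣ a * b
  have hNab : (N : ℤ) ∣ a * b := by
    have : (4 * (N : ℤ)) ∣ 4 * (a * b) := by
      have : (ρ' + ρ) * (ρ' - ρ) = 4 * (a * b) := by rw [ha, hb]; ring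
      rwa [this] at h4N
    exact (mul_dvd_mul_iff_left (by norm_num : (4:ℤ) ≠ 0)).mp this
  have hNab' : N ∣ a.natAbs * b.natAbs := by
    rw [← Int.natAbs_mul]
    exact Int.ofNat_dvd_right.mp (Int.dvd_natAbs.mpr hNab)
  set N₁ : ℕ := Nat.gcd N a.natAbs with hN₁def
  have hN₁dvd : N₁ ∣ N := Nat.gcd_dvd_left _ _
  obtain ⟨N₂, hNsplit⟩ := hN₁dvd
  have hN₁pos : 0 < N₁ := Nat.gcd_pos_of_pos_left _ hN
  have hN₂pos : 0 < N₂ := by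
    rcases Nat.eq_zero_or_pos N₂ with h | h
    · exfalso; rw [h, mul_zero] at hNsplit; omega
    · exact h
  have hcop : Nat.Coprime N₁ N₂ := by
    have := hNsf
    rw [hNsplit, Nat.squarefree_mul_iff] at this
    exact this.1
  -- N₂ coprime to a.natAbs
  have hcop2 : Nat.Coprime N₂ a.natAbs := by
    rw [Nat.coprime_iff_gcd_eq_one]
    by_contra hg
    obtain ⟨p, hp, hpd⟩ := Nat.exists_prime_and_dvd hg
    have hpN₂ : p ∣ N₂ := hpd.trans (Nat.gcd_dvd_left _ _)
    have hpa : p ∣ a.natAbs := hpd.trans (Nat.gcd_dvd_right _ _)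
    have hpN : p ∣ N := hpN₂.trans ⟨N₁, by rw [hNsplit]; ring⟩
    have hpN₁ : p ∣ N₁ := Nat.dvd_gcd hpN hpa
    have : p ∣ Nat.gcd N₁ N₂ := Nat.dvd_gcd hpN₁ hpN₂
    rw [Nat.Coprime] at hcop
    rw [hcop] at this
    exact hp.ne_one (Nat.eq_one_of_dvd_one this)
  have hN₂b : N₂ ∣ b.natAbs := by
    have hN₂ab : N₂ ∣ a.natAbs * b.natAbs := dvd_trans ⟨N₁, by rw [hNsplit]; ring⟩ hNab'
    exact (Nat.Coprime.dvd_of_dvd_mul_left hcop2 hN₂ab)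
  refine ⟨N₁, N₂, hN₁pos, hN₂pos, hcop, hNsplit, ?_, ?_⟩
  · rw [Int.modEq_iff_dvd]
    have h1 : (N₁ : ℤ) ∣ a :=
      (Int.ofNat_dvd.mpr (Nat.gcd_dvd_right N a.natAbs)).trans (Int.natAbs_dvd.mpr dvd_rfl)
    obtain ⟨c, hc⟩ := h1
    exact ⟨-c, by rw [show -ρ - ρ' = -(ρ' + ρ) by ring, ha, hc]; push_cast; ring⟩
  · rw [Int.modEq_iff_dvd]
    have h1 : (N₂ : ℤ) ∣ b :=
      (Int.ofNat_dvd.mpr hN₂b).trans (Int.natAbs_dvd.mpr dvd_rfl)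
    obtain ⟨c, hc⟩ := h1
    exact ⟨-c, by rw [show ρ - ρ' = -(ρ' - ρ) by ring, hb, hc]; push_cast; ring⟩
end

section
/- Let N be a prime, D < 0, k even, and let a : Q_{N,D} → ℂ satisfy a(T[U]) = a(T) for all U ∈ Γ₀(N) and a([Na, −b, c]) = a([Na, b, c]) for all [Na, b, c] ∈ Q_{N,D}. Then B(D) = |A(D)|, where B(D) := (1/2) Σ_{ρ ∈ R_D} |B(D, ρ)| and A(D) := (1/2) Σ_{T ∈ Q_{N,D}/Γ₀(N)} a(T)/ε(T). -/
/-!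
The residue `b mod 2N` is a `Γ₀(N)`-invariant of `[Na, b, c]`, so `A(D)` splits as
`(1/2) Σ_{ρ ∈ R_D} B(D, ρ)`. For prime `N` any two `ρ, ρ' ∈ R_D` satisfy `ρ' ≡ ±ρ (mod 2N)`,
and the reflection `[Na, b, c] ↦ [Na, -b, c]`, which intertwines `U` with its conjugate by
`diag(1, -1)` (an automorphism of `Γ₀(N)`), maps orbit representatives of `Q_{N,D,-ρ}` to
those of `Q_{N,D,ρ}` and preserves `a` and `ε`. Hence all `B(D, ρ)` are equal, and the
triangle inequality `|Σ_ρ B(D, ρ)| ≤ Σ_ρ |B(D, ρ)|` is an equality.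
-/

open CongruenceSubgroup

theorem mem_Gamma0Set_iff {N : ℕ} {U : SL2Z} : U ∈ Gamma0Set N ↔ U ∈ Gamma0 N := by
  rw [Gamma0_mem, ZMod.intCast_zmod_eq_zero_iff_dvd]
  rfl

theorem SL2Z.det_eq_one (U : SL2Z) : U 0 0 * U 1 1 - U 0 1 * U 1 0 = 1 := by
  rw [← Matrix.det_fin_two]
  exact U.2

namespace BQF

@[simp]
theorem act_one (T : BQF) : T.act 1 = T := by
  simp [act]

theorem act_mul (T : BQF) (U V : SL2Z) : T.act (U * V) = (T.act U).act V := by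
  simp only [act, Matrix.SpecialLinearGroup.coe_mul, Matrix.mul_apply, Fin.sum_univ_two, mk.injEq]
  refine ⟨?_, ?_, ?_⟩ <;> ring

@[simp]
theorem act_act_inv (T : BQF) (U : SL2Z) : (T.act U).act U⁻¹ = T := by
  rw [← act_mul, mul_inv_cancel, act_one]

theorem act_inv_eq_iff {S T : BQF} {U : SL2Z} : S.act U⁻¹ = T ↔ S = T.act U := by
  constructor
  · rintro rfl
    rw [← act_mul, inv_mul_cancel, act_one]
  · rintro rfl
    exact act_act_inv T U

theorem act_b_modEq {N : ℤ} {T : BQF} (hT : N ∣ T.a) {U : SL2Z} (hU : N ∣ U 1 0) :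
    (T.act U).b ≡ T.b [ZMOD 2 * N] := by
  obtain ⟨a', ha'⟩ := hT
  obtain ⟨g, hg⟩ := hU
  have hdet := U.det_eq_one
  rw [hg] at hdet
  refine (Int.modEq_iff_dvd.mpr ⟨a' * U 0 0 * U 0 1 + T.b * U 0 1 * g + T.c * g * U 1 1, ?_⟩).symm
  simp only [act]
  rw [ha', hg]
  linear_combination T.b * hdet

theorem b_sq_modEq_disc {N : ℤ} {T : BQF} (hT : N ∣ T.a) :
    T.b ^ 2 ≡ T.disc [ZMOD 4 * N] := by
  obtain ⟨a', ha'⟩ := hT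
  exact Int.modEq_iff_dvd.mpr ⟨-(a' * T.c), by rw [disc, ha']; ring⟩

def negB (T : BQF) : BQF := ⟨T.a, -T.b, T.c⟩

@[simp]
theorem negB_negB (T : BQF) : T.negB.negB = T := by
  simp [negB]

theorem negB_injective : Function.Injective negB :=
  Function.LeftInverse.injective negB_negB

theorem PosDef.negB {T : BQF} (hT : T.PosDef) : T.negB.PosDef := by
  intro x y hxy
  have h := hT x (-y) fun ⟨h₁, h₂⟩ => hxy ⟨h₁, neg_eq_zero.mp h₂⟩
  simp only [eval, BQF.negB] at h ⊢
  linarith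

theorem disc_negB (T : BQF) : T.negB.disc = T.disc := by
  simp [disc, negB]

end BQF

open BQF

/-- Conjugation by `diag(1, -1)`. -/
def negOffDiag (U : SL2Z) : SL2Z :=
  ⟨!![U 0 0, -U 0 1; -U 1 0, U 1 1], by
    rw [Matrix.det_fin_two_of]
    linear_combination U.det_eq_one⟩

theorem negOffDiag_involutive : Function.Involutive negOffDiag := fun U => by
  ext i j
  fin_cases i <;> fin_cases j <;> simp [negOffDiag]

theorem negOffDiag_mem_Gamma0Set_iff {N : ℕ} {U : SL2Z} :
    negOffDiag U ∈ Gamma0Set N ↔ U ∈ Gamma0Set N :=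
  dvd_neg

theorem negB_act (T : BQF) (U : SL2Z) : T.negB.act (negOffDiag U) = (T.act U).negB := by
  simp only [negB, act, negOffDiag, Matrix.of_apply, Matrix.cons_val', Matrix.cons_val_zero,
    Matrix.cons_val_one, Matrix.empty_val', Matrix.cons_val_fin_one, mk.injEq]
  refine ⟨?_, ?_, ?_⟩ <;> ring

theorem negB_mem_QND {N : ℕ} {D : ℤ} {T : BQF} (hT : T ∈ QND N D) : T.negB ∈ QND N D :=
  ⟨hT.1.negB, hT.2.1, (disc_negB T).trans hT.2.2⟩

theorem QNDrho_congr {N : ℕ} {D ρ ρ' : ℤ} (h : ρ ≡ ρ' [ZMOD 2 * N]) :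
    QNDrho N D ρ = QNDrho N D ρ' := by
  ext T
  exact and_congr_right fun _ => ⟨fun hT => hT.trans h, fun hT => hT.trans h.symm⟩

theorem negB_mem_QNDrho {N : ℕ} {D ρ : ℤ} {T : BQF} (hT : T ∈ QNDrho N D ρ) :
    T.negB ∈ QNDrho N D (-ρ) :=
  ⟨negB_mem_QND hT.1, hT.2.neg⟩

theorem eps_act {N : ℕ} (T : BQF) {U : SL2Z} (hU : U ∈ Gamma0Set N) :
    eps N (T.act U) = eps N T := by
  rw [mem_Gamma0Set_iff] at hU
  refine Nat.card_congr ((MulAut.conj U).toEquiv.subtypeEquiv fun V => ?_)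
  have hmem : V ∈ Gamma0Set N ↔ U * V * U⁻¹ ∈ Gamma0Set N := by
    simp only [mem_Gamma0Set_iff, Subgroup.mul_mem_cancel_right _ (inv_mem hU),
      Subgroup.mul_mem_cancel_left _ hU]
  have hstab : (T.act U).act V = T.act U ↔ T.act (U * V * U⁻¹) = T := by
    rw [← act_mul, act_mul T (U * V), act_inv_eq_iff]
  exact and_congr hmem hstab

theorem eps_negB (N : ℕ) (T : BQF) : eps N T.negB = eps N T := by
  refine Nat.card_congr (negOffDiag_involutive.toPerm.subtypeEquiv fun V => ?_)
  have h := negB_act T (negOffDiag V)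
  rw [negOffDiag_involutive V] at h
  rw [Function.Involutive.coe_toPerm, h, negB_injective.eq_iff, negOffDiag_mem_Gamma0Set_iff]

def Gamma0Rel (N : ℕ) (T T' : BQF) : Prop := ∃ U ∈ Gamma0Set N, T.act U = T'

theorem Gamma0Rel.refl (N : ℕ) (T : BQF) : Gamma0Rel N T T :=
  ⟨1, dvd_zero _, act_one T⟩

theorem Gamma0Rel.trans {N : ℕ} {T T' T'' : BQF} (h : Gamma0Rel N T T')
    (h' : Gamma0Rel N T' T'') : Gamma0Rel N T T'' := by
  obtain ⟨U, hU, rfl⟩ := h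
  obtain ⟨V, hV, rfl⟩ := h'
  refine ⟨U * V, mem_Gamma0Set_iff.2 (mul_mem ?_ ?_), act_mul T U V⟩ <;>
    rwa [← mem_Gamma0Set_iff]

theorem Gamma0Rel.negB {N : ℕ} {T T' : BQF} (h : Gamma0Rel N T T') :
    Gamma0Rel N T.negB T'.negB := by
  obtain ⟨U, hU, rfl⟩ := h
  exact ⟨negOffDiag U, negOffDiag_mem_Gamma0Set_iff.2 hU, negB_act T U⟩

namespace IsOrbitReps

variable {N : ℕ} {S : Set BQF} {R : Finset BQF}

theorem exists_rel (hR : IsOrbitReps N S R) {T : BQF} (hT : T ∈ S) :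
    ∃ T' ∈ R, Gamma0Rel N T T' :=
  let ⟨T', hT', _⟩ := hR.2 T hT
  ⟨T', hT'⟩

theorem eq_of_rel (hR : IsOrbitReps N S R) {T T' : BQF} (hT : T ∈ R) (hT' : T' ∈ R)
    (h : Gamma0Rel N T T') : T = T' :=
  (hR.2 T (hR.1 T hT)).unique ⟨hT, Gamma0Rel.refl N T⟩ ⟨hT', h⟩

theorem sum_eq {M : Type*} [AddCommMonoid M] {R' : Finset BQF} (hR : IsOrbitReps N S R)
    (hR' : IsOrbitReps N S R') {f : BQF → M}
    (hf : ∀ T ∈ S, ∀ U ∈ Gamma0Set N, f (T.act U) = f T) :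
    ∑ T ∈ R, f T = ∑ T ∈ R', f T := by
  choose! i hiR hi using fun T (hT : T ∈ R) => hR'.exists_rel (hR.1 T hT)
  choose! j hjR hj using fun T (hT : T ∈ R') => hR.exists_rel (hR'.1 T hT)
  refine Finset.sum_nbij' i j hiR hjR (fun T hT => ?_) (fun T hT => ?_) (fun T hT => ?_)
  · exact (hR.eq_of_rel hT (hjR _ (hiR T hT)) ((hi T hT).trans (hj _ (hiR T hT)))).symm
  · exact (hR'.eq_of_rel hT (hiR _ (hjR T hT)) ((hj T hT).trans (hi _ (hjR T hT)))).symm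
  · obtain ⟨U, hU, hTU⟩ := hi T hT
    rw [← hTU, hf T (hR.1 T hT) U hU]

end IsOrbitReps

def bResidue (N : ℕ) (T : BQF) : ℕ := (T.b % (2 * N)).toNat

theorem bResidue_eq_iff {N : ℕ} (hN : 0 < N) {ρ : ℕ} (hρ : ρ < 2 * N) (T : BQF) :
    bResidue N T = ρ ↔ T.b ≡ ρ [ZMOD 2 * N] := by
  have h0 : 0 ≤ T.b % (2 * N) := Int.emod_nonneg _ (by positivity)
  rw [bResidue, Int.ModEq, Int.emod_eq_of_lt (Int.natCast_nonneg ρ) (by exact_mod_cast hρ)]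
  omega

theorem bResidue_lt {N : ℕ} (hN : 0 < N) (T : BQF) : bResidue N T < 2 * N := by
  have h : T.b % (2 * N) < 2 * N := Int.emod_lt_of_pos _ (by positivity)
  rw [bResidue]
  omega

theorem modEq_bResidue {N : ℕ} (hN : 0 < N) (T : BQF) : T.b ≡ bResidue N T [ZMOD 2 * N] :=
  (bResidue_eq_iff hN (bResidue_lt hN T) T).1 rfl

theorem sq_modEq_sq_of_modEq_two_mul {n x y : ℤ} (h : x ≡ y [ZMOD 2 * n]) :
    x ^ 2 ≡ y ^ 2 [ZMOD 4 * n] := by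
  obtain ⟨k, hk⟩ := h.dvd
  exact Int.modEq_iff_dvd.2 ⟨k * x + n * k ^ 2, by
    rw [show y = x + 2 * n * k by linarith]
    ring⟩

theorem bResidue_sq_modEq_disc {N : ℕ} (hN : 0 < N) {T : BQF} (hT : (N : ℤ) ∣ T.a) :
    (bResidue N T : ℤ) ^ 2 ≡ T.disc [ZMOD 4 * N] :=
  (sq_modEq_sq_of_modEq_two_mul (modEq_bResidue hN T)).symm.trans (b_sq_modEq_disc hT)

theorem IsOrbitReps.filter_bResidue {N : ℕ} (hN : 0 < N) {D : ℤ} {R : Finset BQF}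
    (hR : IsOrbitReps N (QND N D) R) {ρ : ℕ} (hρ : ρ < 2 * N) :
    IsOrbitReps N (QNDrho N D ρ) (R.filter (bResidue N · = ρ)) := by
  refine ⟨fun T hT => ?_, fun T ⟨hTQ, hTb⟩ => ?_⟩
  · rw [Finset.mem_filter] at hT
    exact ⟨hR.1 T hT.1, (bResidue_eq_iff hN hρ T).1 hT.2⟩
  · obtain ⟨T', ⟨hT'R, hrel⟩, huniq⟩ := hR.2 T hTQ
    refine ⟨T', ⟨Finset.mem_filter.2 ⟨hT'R, (bResidue_eq_iff hN hρ T').2 ?_⟩, hrel⟩,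
      fun T'' ⟨hT'', hrel''⟩ => huniq T'' ⟨(Finset.mem_filter.1 hT'').1, hrel''⟩⟩
    obtain ⟨U, hU, rfl⟩ := hrel
    exact (act_b_modEq hTQ.2.1 hU).trans hTb

theorem IsOrbitReps.map_negB {N : ℕ} {D ρ : ℤ} {R : Finset BQF}
    (hR : IsOrbitReps N (QNDrho N D (-ρ)) R) :
    IsOrbitReps N (QNDrho N D ρ) (R.map ⟨negB, negB_injective⟩) := by
  refine ⟨fun T hT => ?_, fun T hT => ?_⟩
  · obtain ⟨T', hT', rfl⟩ := Finset.mem_map.1 hT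
    simpa using negB_mem_QNDrho (hR.1 T' hT')
  · obtain ⟨T', ⟨hT'R, hrel⟩, huniq⟩ := hR.2 T.negB (negB_mem_QNDrho hT)
    refine ⟨T'.negB, ⟨Finset.mem_map_of_mem _ hT'R, negB_negB T ▸ Gamma0Rel.negB hrel⟩, ?_⟩
    rintro _ ⟨hS, hrelS⟩
    obtain ⟨S, hSR, rfl⟩ := Finset.mem_map.1 hS
    have hrelS' : Gamma0Rel N T.negB S := negB_negB S ▸ Gamma0Rel.negB hrelS
    exact congrArg negB (huniq S ⟨hSR, hrelS'⟩)

theorem sum_reps_eq_of_neg {M : Type*} [AddCommMonoid M] {N : ℕ} {D ρ : ℤ} {R R' : Finset BQF}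
    (hR : IsOrbitReps N (QNDrho N D ρ) R) (hR' : IsOrbitReps N (QNDrho N D (-ρ)) R')
    {f : BQF → M} (hf : ∀ T ∈ QND N D, ∀ U ∈ Gamma0Set N, f (T.act U) = f T)
    (hf' : ∀ T ∈ QND N D, f T.negB = f T) :
    ∑ T ∈ R, f T = ∑ T ∈ R', f T := by
  rw [hR.sum_eq hR'.map_negB fun T hT => hf T hT.1, Finset.sum_map]
  exact Finset.sum_congr rfl fun T hT => hf' T (hR'.1 T hT).1

theorem modEq_or_modEq_neg_of_sq_modEq {p : ℕ} (hp : p.Prime) {x y : ℤ}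
    (h : x ^ 2 ≡ y ^ 2 [ZMOD 4 * p]) : x ≡ y [ZMOD 2 * p] ∨ x ≡ -y [ZMOD 2 * p] := by
  obtain ⟨k, hk⟩ := h.dvd
  have hev : Even (y - x) := by
    have : Even (y ^ 2 - x ^ 2) := ⟨2 * p * k, by rw [hk]; ring⟩
    simpa [Int.even_sub, parity_simps] using this
  obtain ⟨u, rfl⟩ : ∃ u, y = x + 2 * u := by
    obtain ⟨u, hu⟩ := hev
    exact ⟨u, by linarith⟩
  have hdvd : (p : ℤ) ∣ u * (u + x) := ⟨k, by linarith⟩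
  rcases (Nat.prime_iff_prime_int.mp hp).dvd_mul.1 hdvd with ⟨w, hw⟩ | ⟨w, hw⟩
  · exact Or.inl (Int.modEq_iff_dvd.2 ⟨w, by linarith⟩)
  · exact Or.inr (Int.modEq_iff_dvd.2 ⟨-w, by linarith⟩)

theorem sum_reps_eq_of_sq_modEq {M : Type*} [AddCommMonoid M] {N : ℕ} (hN : N.Prime)
    {D ρ ρ' : ℤ} (hρ : ρ ^ 2 ≡ ρ' ^ 2 [ZMOD 4 * N]) {R R' : Finset BQF}
    (hR : IsOrbitReps N (QNDrho N D ρ) R) (hR' : IsOrbitReps N (QNDrho N D ρ') R')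
    {f : BQF → M} (hf : ∀ T ∈ QND N D, ∀ U ∈ Gamma0Set N, f (T.act U) = f T)
    (hf' : ∀ T ∈ QND N D, f T.negB = f T) :
    ∑ T ∈ R, f T = ∑ T ∈ R', f T := by
  rcases modEq_or_modEq_neg_of_sq_modEq hN hρ with h | h
  · rw [QNDrho_congr h] at hR
    exact hR.sum_eq hR' fun T hT => hf T hT.1
  · rw [QNDrho_congr (by simpa using h.neg : -ρ ≡ ρ' [ZMOD 2 * N]).symm] at hR'
    exact sum_reps_eq_of_neg hR hR' hf hf'

theorem norm_sum_eq_sum_norm_of_forall_eq {ι E : Type*} [NormedAddCommGroup E]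
    [NormedSpace ℝ E] {s : Finset ι} {g : ι → E} (h : ∀ i ∈ s, ∀ j ∈ s, g i = g j) :
    ‖∑ i ∈ s, g i‖ = ∑ i ∈ s, ‖g i‖ := by
  rcases s.eq_empty_or_nonempty with rfl | ⟨i, hi⟩
  · simp
  rw [Finset.sum_congr rfl fun j hj => h j hj i hi,
    Finset.sum_congr rfl fun j hj => congrArg norm (h j hj i hi), Finset.sum_const,
    Finset.sum_const, RCLike.norm_nsmul ℝ]

theorem stmt13_general (N : ℕ) (hN : N.Prime) (D : ℤ)
    (a : BQF → ℂ)
    (hinv : ∀ T ∈ QND N D, ∀ U ∈ Gamma0Set N, a (T.act U) = a T)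
    (heven : ∀ T : BQF, T ∈ QND N D → a ⟨T.a, -T.b, T.c⟩ = a T)
    (R : Finset BQF) (hR : IsOrbitReps N (QND N D) R)
    (Rρ : ℕ → Finset BQF)
    (hRρ : ∀ ρ ∈ (Finset.range (2 * N)).filter
        (fun ρ : ℕ => ((ρ : ℤ) ^ 2 ≡ D [ZMOD (4 * N)])),
      IsOrbitReps N (QNDrho N D (ρ : ℤ)) (Rρ ρ)) :
    (1 / 2 : ℝ) * ∑ ρ ∈ (Finset.range (2 * N)).filter
        (fun ρ : ℕ => ((ρ : ℤ) ^ 2 ≡ D [ZMOD (4 * N)])),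
      ‖∑ T ∈ Rρ ρ, a T / (eps N T : ℂ)‖ =
    ‖(1 / 2 : ℂ) * ∑ T ∈ R, a T / (eps N T : ℂ)‖ := by
  set F := (Finset.range (2 * N)).filter fun ρ : ℕ => ((ρ : ℤ) ^ 2 ≡ D [ZMOD (4 * N)])
  set f : BQF → ℂ := fun T => a T / (eps N T : ℂ)
  have hf (T) (hT : T ∈ QND N D) (U) (hU : U ∈ Gamma0Set N) : f (T.act U) = f T := by
    simp only [f, hinv T hT U hU, eps_act T hU]
  have hf' (T) (hT : T ∈ QND N D) : f T.negB = f T := by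
    simp only [f, eps_negB]
    exact congrArg (· / (eps N T : ℂ)) (heven T hT)
  have hmaps (T) (hT : T ∈ R) : bResidue N T ∈ F := by
    have hTQ := hR.1 T hT
    refine Finset.mem_filter.2 ⟨Finset.mem_range.2 (bResidue_lt hN.pos T), ?_⟩
    exact hTQ.2.2 ▸ bResidue_sq_modEq_disc hN.pos hTQ.2.1
  have hsplit : ∑ T ∈ R, f T = ∑ ρ ∈ F, ∑ T ∈ Rρ ρ, f T := by
    rw [← Finset.sum_fiberwise_of_maps_to hmaps]
    refine Finset.sum_congr rfl fun ρ hρ => ?_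
    have hρ2N := Finset.mem_range.1 (Finset.mem_filter.1 hρ).1
    exact (hR.filter_bResidue hN.pos hρ2N).sum_eq (hRρ ρ hρ) fun T hT => hf T hT.1
  have hconst : ∀ ρ ∈ F, ∀ ρ' ∈ F, ∑ T ∈ Rρ ρ, f T = ∑ T ∈ Rρ ρ', f T := fun ρ hρ ρ' hρ' =>
    sum_reps_eq_of_sq_modEq hN ((Finset.mem_filter.1 hρ).2.trans (Finset.mem_filter.1 hρ').2.symm)
      (hRρ ρ hρ) (hRρ ρ' hρ') hf hf'
  rw [hsplit, norm_mul, norm_sum_eq_sum_norm_of_forall_eq hconst]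
  norm_num

/-- Let `N` be prime, `D < 0`, and let `a : Q_{N,D} → ℂ` be `Γ₀(N)`-invariant with
`a([Na, −b, c]) = a([Na, b, c])` (even weight).  Then `B(D) = |A(D)|`, where
`B(D) := (1/2) Σ_{ρ ∈ R_D} |B(D, ρ)|`,
`B(D, ρ) := Σ_{T ∈ Q_{N,D,ρ}/Γ₀(N)} a(T)/ε(T)`,
`A(D) := (1/2) Σ_{T ∈ Q_{N,D}/Γ₀(N)} a(T)/ε(T)`, and
`R_D = {ρ ∈ ℤ/2Nℤ : ρ² ≡ D (mod 4N)}` (represented by the residues `0 ≤ ρ < 2N`);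
the sums run over any sets of orbit representatives. -/
theorem stmt13 (N : ℕ) (hN : N.Prime) (D : ℤ) (hD : D < 0)
    (a : BQF → ℂ)
    (hinv : ∀ T ∈ QND N D, ∀ U ∈ Gamma0Set N, a (T.act U) = a T)
    (heven : ∀ T : BQF, T ∈ QND N D → a ⟨T.a, -T.b, T.c⟩ = a T)
    (R : Finset BQF) (hR : IsOrbitReps N (QND N D) R)
    (Rρ : ℕ → Finset BQF)
    (hRρ : ∀ ρ ∈ (Finset.range (2 * N)).filter
        (fun ρ : ℕ => ((ρ : ℤ) ^ 2 ≡ D [ZMOD (4 * N)])),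
      IsOrbitReps N (QNDrho N D (ρ : ℤ)) (Rρ ρ)) :
    (1 / 2 : ℝ) * ∑ ρ ∈ (Finset.range (2 * N)).filter
        (fun ρ : ℕ => ((ρ : ℤ) ^ 2 ≡ D [ZMOD (4 * N)])),
      ‖∑ T ∈ Rρ ρ, a T / (eps N T : ℂ)‖ =
    ‖(1 / 2 : ℂ) * ∑ T ∈ R, a T / (eps N T : ℂ)‖ :=
  stmt13_general N hN D a hinv heven R hR Rρ hRρ
end
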